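/- Let β > 0 and let m̃_β be the probability measure on the open unit disc 𝔻 with density β(1−|z|²)^{β−1} with respect to normalized area measure. Then there exist constants c, C > 0 depending only on β such that for all 0 < ε ≤ 1, c · ε^{β + 1/2} ≤ m̃_β({z ∈ 𝔻 : Re(1−z) < ε}) ≤ C · ε^{β + 1/2}. -/

import Mathlib

open MeasureTheory

/-- The probability measure on the open unit disc with density `β(1-|z|²)^{β-1}` with
respect to the area measure normalized so that the unit disc has measure 1
(i.e. Lebesgue measure divided by `π`). -/
noncomputable def mB (β : ℝ) : Measure ℂ :=
  (volume.restrict {z : ℂ | ‖z‖ < 1}).withDensity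
    (fun z => ENNReal.ofReal (β * (1 - ‖z‖ ^ 2) ^ (β - 1) / Real.pi))

/-!
Slice the region by the vertical chords `Re z = x`, `1 - ε < x < 1`. On the chord of half-length
`√(1 - x²)` the substitution `y = √(1 - x²) t` turns the integral of the density into
`(β / π) K (1 - x²) ^ (β - 1/2)`, where `K = ∫_{-1}^{1} (1 - t²) ^ (β - 1) dt` is finite and
positive. As `1 - x² = (1 - x)(1 + x)` with `1 + x ∈ [1, 2]`, integrating over `x` gives
`ε ^ (β + 1/2)` up to constants.
-/

open Set
open scoped ENNReal

lemma rpow_one_add_le_max {p x : ℝ} (hx₀ : 0 ≤ x) (hx₁ : x ≤ 1) :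
    (1 + x) ^ p ≤ max 1 (2 ^ p) := by
  rcases le_total 0 p with hp | hp
  · exact (Real.rpow_le_rpow (by linarith) (by linarith) hp).trans (le_max_right _ _)
  · calc (1 + x) ^ p ≤ 1 ^ p := Real.rpow_le_rpow_of_nonpos one_pos (by linarith) hp
      _ ≤ max 1 (2 ^ p) := by simp

lemma min_le_rpow_one_add {p x : ℝ} (hx₀ : 0 ≤ x) (hx₁ : x ≤ 1) :
    min 1 (2 ^ p) ≤ (1 + x) ^ p := by
  rcases le_total 0 p with hp | hp
  · calc min 1 (2 ^ p) ≤ (1 : ℝ) ^ p := by simp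
      _ ≤ (1 + x) ^ p := Real.rpow_le_rpow zero_le_one (by linarith) hp
  · exact (min_le_right _ _).trans (Real.rpow_le_rpow_of_nonpos (by linarith) (by linarith) hp)

lemma setLIntegral_Ioo_one_sub_rpow {p c : ℝ} (hp : -1 < p) (hc : c ≤ 1) :
    ∫⁻ x in Ioo c 1, ENNReal.ofReal ((1 - x) ^ p) =
      ENNReal.ofReal ((1 - c) ^ (p + 1) / (p + 1)) := by
  have hint : IntervalIntegrable (fun x => (1 - x) ^ p) volume c 1 := by
    simpa using ((intervalIntegral.intervalIntegrable_rpow' (a := 0) (b := 1 - c) hp).comp_sub_left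
      1).symm
  rw [← ofReal_integral_eq_lintegral_ofReal (hint.1.mono_set Ioo_subset_Ioc_self)]
  · rw [← integral_Ioc_eq_integral_Ioo, ← intervalIntegral.integral_of_le hc,
      intervalIntegral.integral_comp_sub_left (· ^ p), sub_self,
      integral_rpow (Or.inl hp), Real.zero_rpow (by linarith), sub_zero]
  · filter_upwards [ae_restrict_mem measurableSet_Ioo] with x hx
    exact Real.rpow_nonneg (by linarith [hx.2]) p

lemma one_sub_sq_rpow {x : ℝ} (hx₀ : -1 ≤ x) (hx₁ : x ≤ 1) (p : ℝ) :
    (1 - x ^ 2) ^ p = (1 - x) ^ p * (1 + x) ^ p := by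
  rw [← Real.mul_rpow (by linarith) (by linarith)]
  ring_nf

lemma setLIntegral_Ioo_one_sub_sq_rpow_le {p ε : ℝ} (hp : -1 < p) (hε₀ : 0 ≤ ε)
    (hε₁ : ε ≤ 1) :
    ∫⁻ x in Ioo (1 - ε) 1, ENNReal.ofReal ((1 - x ^ 2) ^ p) ≤
      ENNReal.ofReal (max 1 (2 ^ p)) * ENNReal.ofReal (ε ^ (p + 1) / (p + 1)) := by
  calc ∫⁻ x in Ioo (1 - ε) 1, ENNReal.ofReal ((1 - x ^ 2) ^ p)
      ≤ ∫⁻ x in Ioo (1 - ε) 1,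
          ENNReal.ofReal (max 1 (2 ^ p)) * ENNReal.ofReal ((1 - x) ^ p) := by
        refine setLIntegral_mono (by fun_prop) fun x hx => ?_
        rw [← ENNReal.ofReal_mul (by positivity), one_sub_sq_rpow (by linarith [hx.1]) hx.2.le,
          mul_comm (max _ _)]
        gcongr
        · exact Real.rpow_nonneg (by linarith [hx.2]) p
        · exact rpow_one_add_le_max (by linarith [hx.1]) hx.2.le
    _ = _ := by
        rw [lintegral_const_mul _ (by fun_prop), setLIntegral_Ioo_one_sub_rpow hp (by linarith),
          sub_sub_cancel]

lemma le_setLIntegral_Ioo_one_sub_sq_rpow {p ε : ℝ} (hp : -1 < p) (hε₀ : 0 ≤ ε)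
    (hε₁ : ε ≤ 1) :
    ENNReal.ofReal (min 1 (2 ^ p)) * ENNReal.ofReal (ε ^ (p + 1) / (p + 1)) ≤
      ∫⁻ x in Ioo (1 - ε) 1, ENNReal.ofReal ((1 - x ^ 2) ^ p) := by
  calc _ = ∫⁻ x in Ioo (1 - ε) 1,
          ENNReal.ofReal (min 1 (2 ^ p)) * ENNReal.ofReal ((1 - x) ^ p) := by
        rw [lintegral_const_mul _ (by fun_prop), setLIntegral_Ioo_one_sub_rpow hp (by linarith),
          sub_sub_cancel]
    _ ≤ _ := by
        refine setLIntegral_mono (by fun_prop) fun x hx => ?_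
        rw [← ENNReal.ofReal_mul (by positivity), one_sub_sq_rpow (by linarith [hx.1]) hx.2.le,
          mul_comm (min _ _)]
        gcongr
        · exact Real.rpow_nonneg (by linarith [hx.2]) p
        · exact min_le_rpow_one_add (by linarith [hx.1]) hx.2.le

-- `chordIntegral p = B(1/2, p + 1)`
noncomputable def chordIntegral (p : ℝ) : ℝ≥0∞ :=
  ∫⁻ t in Ioo (-1) 1, ENNReal.ofReal ((1 - t ^ 2) ^ p)

lemma chordIntegral_eq_two_mul (p : ℝ) :
    chordIntegral p = 2 * ∫⁻ t in Ioo 0 1, ENNReal.ofReal ((1 - t ^ 2) ^ p) := by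
  have hneg : ∫⁻ t in Ioo (-1) 0, ENNReal.ofReal ((1 - t ^ 2) ^ p) =
      ∫⁻ t in Ioo 0 1, ENNReal.ofReal ((1 - t ^ 2) ^ p) := by
    rw [← (Measure.measurePreserving_neg volume).setLIntegral_comp_preimage_emb
      measurableEmbedding_neg]
    simp
  rw [chordIntegral, ← Ioo_union_Ico_eq_Ioo (by norm_num : (-1 : ℝ) < 0) zero_le_one,
    lintegral_union measurableSet_Ico (Ico_disjoint_Ico_same.mono_left Ioo_subset_Ico_self), hneg,
    setLIntegral_congr Ioo_ae_eq_Ico.symm, two_mul]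

lemma chordIntegral_pos {p : ℝ} (hp : -1 < p) : 0 < chordIntegral p := by
  have h := le_setLIntegral_Ioo_one_sub_sq_rpow hp zero_le_one le_rfl
  rw [sub_self] at h
  rw [chordIntegral_eq_two_mul]
  refine ENNReal.mul_pos two_ne_zero (lt_of_lt_of_le ?_ h).ne'
  simp only [Real.one_rpow, one_div]
  exact ENNReal.mul_pos (by simp; positivity) (by simp; linarith)

lemma chordIntegral_lt_top {p : ℝ} (hp : -1 < p) : chordIntegral p < ∞ := by
  have h := setLIntegral_Ioo_one_sub_sq_rpow_le hp zero_le_one le_rfl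
  rw [sub_self] at h
  rw [chordIntegral_eq_two_mul]
  exact ENNReal.mul_lt_top ENNReal.ofNat_lt_top (h.trans_lt (by finiteness))

lemma setLIntegral_Ioo_sub_sq_rpow {r : ℝ} (hr : 0 < r) (p : ℝ) :
    ∫⁻ y in Ioo (-√r) √r, ENNReal.ofReal ((r - y ^ 2) ^ p) =
      ENNReal.ofReal (r ^ (p + 1 / 2)) * chordIntegral p := by
  have ha : 0 < √r := Real.sqrt_pos.2 hr
  rw [← Real.smul_map_volume_mul_left ha.ne', Measure.restrict_smul, lintegral_smul_measure,
    setLIntegral_map measurableSet_Ioo (by fun_prop) (by fun_prop),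
    preimage_const_mul_Ioo₀ _ _ ha, neg_div, div_self ha.ne', abs_of_pos ha, chordIntegral,
    ← lintegral_const_mul _ (by fun_prop), smul_eq_mul, ← lintegral_const_mul _ (by fun_prop)]
  refine setLIntegral_congr_fun measurableSet_Ioo fun t ht => ?_
  have ht2 : 0 ≤ 1 - t ^ 2 := by nlinarith [ht.1, ht.2]
  rw [← ENNReal.ofReal_mul ha.le, ← ENNReal.ofReal_mul (by positivity), mul_pow,
    Real.sq_sqrt hr.le, ← mul_one_sub, Real.mul_rpow hr.le ht2, ← mul_assoc, Real.sqrt_eq_rpow,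
    ← Real.rpow_add hr, add_comm]

noncomputable def mBDensity (β : ℝ) (z : ℂ) : ℝ≥0∞ :=
  ENNReal.ofReal (β * (1 - ‖z‖ ^ 2) ^ (β - 1) / Real.pi)

@[fun_prop]
lemma measurable_mBDensity (β : ℝ) : Measurable (mBDensity β) := by
  unfold mBDensity
  fun_prop

lemma mB_apply_of_subset {β : ℝ} {s : Set ℂ} (hs : MeasurableSet s)
    (hsub : s ⊆ {z : ℂ | ‖z‖ < 1}) : mB β s = ∫⁻ z in s, mBDensity β z := by
  rw [mB, withDensity_apply _ hs, Measure.restrict_restrict hs, inter_eq_left.2 hsub]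
  rfl

lemma Complex.lintegral_eq_lintegral_lintegral {f : ℂ → ℝ≥0∞} (hf : Measurable f) :
    ∫⁻ z, f z = ∫⁻ x : ℝ, ∫⁻ y : ℝ, f ⟨x, y⟩ := by
  rw [← (Complex.volume_preserving_equiv_real_prod.symm _).lintegral_comp hf,
    Measure.volume_eq_prod, lintegral_prod _ (by fun_prop)]
  rfl

lemma Complex.norm_mk_sq (x y : ℝ) : ‖(⟨x, y⟩ : ℂ)‖ ^ 2 = x ^ 2 + y ^ 2 := by
  rw [Complex.sq_norm, Complex.normSq_mk]
  ring

lemma mk_mem_setOf_one_sub_re_lt_iff {ε x y : ℝ} :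
    (⟨x, y⟩ : ℂ) ∈ {z : ℂ | ‖z‖ < 1 ∧ (1 - z).re < ε} ↔
      x ∈ Ioo (1 - ε) 1 ∧ y ∈ Ioo (-√(1 - x ^ 2)) √(1 - x ^ 2) := by
  change ‖(⟨x, y⟩ : ℂ)‖ < 1 ∧ (1 - (⟨x, y⟩ : ℂ)).re < ε ↔ _
  rw [← sq_lt_one_iff₀ (norm_nonneg _), Complex.norm_mk_sq, Complex.sub_re, Complex.one_re,
    mem_Ioo, mem_Ioo, ← Real.sq_lt]
  constructor
  · rintro ⟨hxy, hx⟩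
    exact ⟨⟨by linarith, by nlinarith⟩, by linarith⟩
  · rintro ⟨⟨hx, -⟩, hy⟩
    exact ⟨by linarith, by linarith⟩

lemma setLIntegral_chord_mBDensity (β : ℝ) {x : ℝ} (hx : x ^ 2 < 1) :
    ∫⁻ y in Ioo (-√(1 - x ^ 2)) √(1 - x ^ 2), mBDensity β ⟨x, y⟩ =
      ENNReal.ofReal (β / Real.pi) * chordIntegral (β - 1) *
        ENNReal.ofReal ((1 - x ^ 2) ^ (β - 1 / 2)) := by
  have hr : 0 < 1 - x ^ 2 := by linarith
  rw [show β - 1 / 2 = β - 1 + 1 / 2 by ring, mul_assoc, mul_comm (chordIntegral _),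
    ← setLIntegral_Ioo_sub_sq_rpow hr, ← lintegral_const_mul _ (by fun_prop)]
  refine setLIntegral_congr_fun measurableSet_Ioo fun y hy => ?_
  rw [mBDensity, Complex.norm_mk_sq, ← ENNReal.ofReal_mul' ?_]
  · ring_nf
  · exact Real.rpow_nonneg (by linarith [Real.sq_lt.2 hy]) _

theorem mB_setOf_one_sub_re_lt {β ε : ℝ} (hε : ε ≤ 2) :
    mB β {z : ℂ | ‖z‖ < 1 ∧ (1 - z).re < ε} =
      ENNReal.ofReal (β / Real.pi) * chordIntegral (β - 1) *
        ∫⁻ x in Ioo (1 - ε) 1, ENNReal.ofReal ((1 - x ^ 2) ^ (β - 1 / 2)) := by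
  have hS : MeasurableSet {z : ℂ | ‖z‖ < 1 ∧ (1 - z).re < ε} :=
    (measurableSet_lt measurable_norm measurable_const).inter
      (measurableSet_lt (by fun_prop : Measurable fun z : ℂ => (1 - z).re) measurable_const)
  have hslices : ∀ x : ℝ,
      ∫⁻ y, {z : ℂ | ‖z‖ < 1 ∧ (1 - z).re < ε}.indicator (mBDensity β) ⟨x, y⟩ =
      (Ioo (1 - ε) 1).indicator
        (fun x => ∫⁻ y in Ioo (-√(1 - x ^ 2)) √(1 - x ^ 2), mBDensity β ⟨x, y⟩) x := by
    intro x
    by_cases hx : x ∈ Ioo (1 - ε) 1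
    · rw [indicator_of_mem hx, ← lintegral_indicator measurableSet_Ioo]
      simp only [indicator_apply, mk_mem_setOf_one_sub_re_lt_iff, hx, true_and]
    · rw [indicator_of_notMem hx]
      simp only [indicator_apply, mk_mem_setOf_one_sub_re_lt_iff, hx, false_and, if_false,
        lintegral_zero]
  rw [mB_apply_of_subset hS fun z hz => hz.1, ← lintegral_indicator hS,
    Complex.lintegral_eq_lintegral_lintegral (by fun_prop), lintegral_congr hslices,
    lintegral_indicator measurableSet_Ioo, ← lintegral_const_mul _ (by fun_prop)]
  refine setLIntegral_congr_fun measurableSet_Ioo fun x hx => ?_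
  exact setLIntegral_chord_mBDensity β (by nlinarith [hx.1, hx.2])

theorem stmt11 (β : ℝ) (hβ : 0 < β) :
    ∃ c C : ℝ, 0 < c ∧ 0 < C ∧ ∀ ε : ℝ, 0 < ε → ε ≤ 1 →
      ENNReal.ofReal (c * ε ^ (β + 1/2)) ≤ mB β {z : ℂ | ‖z‖ < 1 ∧ (1 - z).re < ε} ∧
      mB β {z : ℂ | ‖z‖ < 1 ∧ (1 - z).re < ε} ≤ ENNReal.ofReal (C * ε ^ (β + 1/2)) := by
  set K := chordIntegral (β - 1)
  have hK_top : K ≠ ⊤ := (chordIntegral_lt_top (by linarith)).ne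
  have hK : 0 < K.toReal := ENNReal.toReal_pos (chordIntegral_pos (by linarith)).ne' hK_top
  have hp : -1 < β - 1 / 2 := by linarith
  have hexp : β - 1 / 2 + 1 = β + 1 / 2 := by ring
  have hfactor : ∀ k ε : ℝ, 0 ≤ k → 0 ≤ ε →
      ENNReal.ofReal (β / Real.pi * K.toReal * k / (β + 1 / 2) * ε ^ (β + 1 / 2)) =
        ENNReal.ofReal (β / Real.pi) * K *
          (ENNReal.ofReal k * ENNReal.ofReal (ε ^ (β - 1 / 2 + 1) / (β - 1 / 2 + 1))) := by
    intro k ε hk hε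
    conv_rhs => rw [hexp, ← ENNReal.ofReal_toReal hK_top]
    rw [← ENNReal.ofReal_mul (by positivity), ← ENNReal.ofReal_mul hk,
      ← ENNReal.ofReal_mul (by positivity)]
    ring_nf
  refine ⟨β / Real.pi * K.toReal * min 1 (2 ^ (β - 1 / 2)) / (β + 1 / 2),
    β / Real.pi * K.toReal * max 1 (2 ^ (β - 1 / 2)) / (β + 1 / 2), by positivity, by positivity,
    fun ε hε₀ hε₁ => ?_⟩
  rw [mB_setOf_one_sub_re_lt (by linarith), hfactor _ _ (by positivity) hε₀.le,
    hfactor _ _ (by positivity) hε₀.le]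
  exact ⟨by gcongr; exact le_setLIntegral_Ioo_one_sub_sq_rpow hp hε₀.le hε₁,
    by gcongr; exact setLIntegral_Ioo_one_sub_sq_rpow_le hp hε₀.le hε₁⟩
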